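/- arXiv:2008.02710 — 7 statements merged into one kernel-verified Lean document; each statement's English description precedes it below -/
import Mathlib

section
/- For all t ≥ 2, the cash vector satisfies C_t = -M_0 (I - P) ∏_{k=1}^{t-1} P(G_k), where P(G_k) = I - I(G_k)(I - P). -/
open Finset Matrix

/-! Each step of the recursion is linear in the cash vector:
`C_{t+1} = C_t - (C_t I(G_t))(I - P) = C_t P(G_t)`, so for `t ≥ 1` the cash vector is `C_1` times the
ordered product of the step matrices `P(G_1) ⋯ P(G_{t-1})`, and `C_1 = -M_0 (I - P)`. -/

namespace Matrix

variable {n R : Type*} [Fintype n] [DecidableEq n] [Ring R]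

theorem sub_vecMul_vecMul_eq_vecMul_one_sub_mul (v : n → R) (D A : Matrix n n R) :
    v - (v ᵥ* D) ᵥ* A = v ᵥ* (1 - D * A) := by
  rw [vecMul_sub, vecMul_one, vecMul_vecMul]

theorem eq_vecMul_list_prod_range_of_succ {v : ℕ → n → R} {A : ℕ → Matrix n n R}
    (hv : ∀ k, v (k + 1) = v k ᵥ* A k) (t : ℕ) :
    v t = v 0 ᵥ* ((List.range t).map A).prod := by
  induction t with
  | zero => simp
  | succ t ih => rw [hv, ih, List.prod_range_succ, vecMul_vecMul]

end Matrix

/-- Cash formula: `C_t = -M_0 (I-P) ∏_{k=1}^{t-1} P(G_k)` for `t ≥ 2`,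
where `P(G) = I - I(G)(I-P)` and `I(G)` is the diagonal indicator of `G`. -/
theorem stmt2 {N : ℕ} (P : Matrix (Fin N) (Fin N) ℝ)
    (G : ℕ → Finset (Fin N))
    (M0 : Fin N → ℝ)
    (C M : ℕ → Fin N → ℝ)
    (hC1 : C 1 = -(M0 ᵥ* (1 - P)))
    (hM : ∀ t ≥ 1, M t =
      (C t) ᵥ* (Matrix.diagonal fun i => if i ∈ G t then (1 : ℝ) else 0))
    (hC : ∀ t ≥ 1, C (t + 1) = C t - (M t) ᵥ* (1 - P)) :
    ∀ t ≥ 2, C t =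
      -(M0 ᵥ* ((1 - P) *
        ((List.range (t - 1)).map (fun k =>
          (1 : Matrix (Fin N) (Fin N) ℝ) -
            (Matrix.diagonal fun i => if i ∈ G (k + 1) then (1 : ℝ) else 0) * (1 - P))).prod)) := by
  intro t ht
  obtain ⟨s, rfl⟩ : ∃ s, t = s + 1 := ⟨t - 1, by omega⟩
  have hstep : ∀ k, C (k + 1 + 1) = C (k + 1) ᵥ*
      (1 - (Matrix.diagonal fun i => if i ∈ G (k + 1) then (1 : ℝ) else 0) * (1 - P)) := by
    intro k
    rw [hC _ k.succ_pos, hM _ k.succ_pos, sub_vecMul_vecMul_eq_vecMul_one_sub_mul]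
  rw [Nat.add_sub_cancel, eq_vecMul_list_prod_range_of_succ (v := fun k => C (k + 1)) hstep s,
    hC1, neg_vecMul, vecMul_vecMul]
end

section
/- If μ and ν are probability vectors on [N] and P is a stochastic matrix, then ‖(μ - ν) P‖₁ ≤ δ(P) ‖μ - ν‖₁, where δ(P) = 1 - min_{i,i′} ∑_j min(p_{ij}, p_{i′j}) is the Dobrushin ergodicity coefficient. -/
/-!
Split `x = μ - ν` into its positive and negative parts `a = x⁺` and `b = x⁻`, which have the
same mass `S` because `∑ x = 0`. Then `S • (x P) = ∑_{i,i'} a_i b_{i'} (P_i - P_{i'})` writes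
`x P` as a mixture of differences of rows of `P`, and the `ℓ¹` distance between rows `i` and `i'`
is `2 (1 - ∑_j min (p_{ij}, p_{i'j})) ≤ 2 δ(P)`. Since `‖x‖₁ = 2 S`, this gives
`S ‖x P‖₁ ≤ δ(P) S ‖x‖₁`.
-/

open Finset Matrix

section Contraction

variable {ι κ : Type*}

lemma sum_abs_sub_eq_two_mul_one_sub_sum_min [Fintype κ] (P : Matrix ι κ ℝ)
    (hP : ∀ i, ∑ j, P i j = 1) (i i' : ι) :
    ∑ j, |P i j - P i' j| = 2 * (1 - ∑ j, min (P i j) (P i' j)) := by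
  have hpoint (j : κ) : |P i j - P i' j| = P i j + P i' j - 2 * min (P i j) (P i' j) := by
    linarith [max_sub_min_eq_abs' (P i j) (P i' j), min_add_max (P i j) (P i' j)]
  simp only [hpoint, sum_sub_distrib, sum_add_distrib, hP, ← mul_sum]
  ring

lemma sum_mul_vecMul_sub_eq [Fintype ι] (P : Matrix ι κ ℝ) (a b : ι → ℝ)
    (hab : ∑ i, a i = ∑ i, b i) (j : κ) :
    (∑ i, a i) * ((a - b) ᵥ* P) j = ∑ i, ∑ i', a i * b i' * (P i j - P i' j) := by
  have hsplit : ∑ i, ∑ i', a i * b i' * (P i j - P i' j)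
      = (∑ i, a i * P i j) * ∑ i', b i' - (∑ i, a i) * ∑ i', b i' * P i' j := by
    simp only [sum_mul_sum, ← sum_sub_distrib]
    exact sum_congr rfl fun i _ => sum_congr rfl fun i' _ => by ring
  rw [hsplit, ← hab]
  simp only [vecMul, dotProduct, Pi.sub_apply, sub_mul, sum_sub_distrib]
  ring

lemma sum_mul_sum_abs_vecMul_sub_le [Fintype ι] [Fintype κ] (P : Matrix ι κ ℝ) {a b : ι → ℝ}
    (ha : 0 ≤ a) (hb : 0 ≤ b) (hab : ∑ i, a i = ∑ i, b i) {c : ℝ}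
    (hP : ∀ i i', ∑ j, |P i j - P i' j| ≤ c) :
    (∑ i, a i) * ∑ j, |((a - b) ᵥ* P) j| ≤ c * (∑ i, a i) ^ 2 := by
  have hS : 0 ≤ ∑ i, a i := sum_nonneg fun i _ => ha i
  have hab' (i i' : ι) : 0 ≤ a i * b i' := mul_nonneg (ha i) (hb i')
  calc (∑ i, a i) * ∑ j, |((a - b) ᵥ* P) j|
      = ∑ j, |∑ i, ∑ i', a i * b i' * (P i j - P i' j)| := by
        simp only [mul_sum, ← sum_mul_vecMul_sub_eq P a b hab, abs_mul, abs_of_nonneg hS]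
    _ ≤ ∑ j, ∑ i, ∑ i', a i * b i' * |P i j - P i' j| := by
        gcongr with j
        refine (abs_sum_le_sum_abs _ _).trans (sum_le_sum fun i _ => ?_)
        refine (abs_sum_le_sum_abs _ _).trans_eq (sum_congr rfl fun i' _ => ?_)
        rw [abs_mul, abs_of_nonneg (hab' i i')]
    _ = ∑ i, ∑ i', a i * b i' * ∑ j, |P i j - P i' j| := by
        simp only [mul_sum]
        rw [sum_comm]
        exact sum_congr rfl fun i _ => sum_comm
    _ ≤ ∑ i, ∑ i', a i * b i' * c := by
        gcongr with i _ i' _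
        · exact hab' i i'
        · exact hP i i'
    _ = c * (∑ i, a i) ^ 2 := by
        simp only [← sum_mul, ← mul_sum, ← hab]
        ring

theorem sum_abs_vecMul_le_of_sum_eq_zero [Fintype ι] [Fintype κ] (P : Matrix ι κ ℝ) {x : ι → ℝ}
    (hx : ∑ i, x i = 0) {c : ℝ} (hP : ∀ i i', ∑ j, |P i j - P i' j| ≤ 2 * c) :
    ∑ j, |(x ᵥ* P) j| ≤ c * ∑ i, |x i| := by
  have hmass : ∑ i, x⁺ i = ∑ i, x⁻ i := by
    rw [← sub_eq_zero, ← sum_sub_distrib, ← hx]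
    exact sum_congr rfl fun i _ => congrFun (posPart_sub_negPart x) i
  have hnorm : ∑ i, |x i| = 2 * ∑ i, x⁺ i := by
    rw [two_mul]
    nth_rewrite 2 [hmass]
    rw [← sum_add_distrib]
    exact sum_congr rfl fun i _ => (posPart_add_negPart (x i)).symm
  have hS : 0 ≤ ∑ i, x⁺ i := sum_nonneg fun i _ => posPart_nonneg (x i)
  have hbound := sum_mul_sum_abs_vecMul_sub_le P (posPart_nonneg x) (negPart_nonneg x) hmass hP
  rw [posPart_sub_negPart] at hbound
  rcases hS.eq_or_lt with hS0 | hSpos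
  · have hnorm0 : ∑ i, |x i| = 0 := by rw [hnorm, ← hS0, mul_zero]
    have hx0 : x = 0 := funext fun i => abs_eq_zero.mp <|
      (sum_eq_zero_iff_of_nonneg fun i _ => abs_nonneg (x i)).mp hnorm0 i (mem_univ i)
    simp [hx0]
  · rw [hnorm]
    nlinarith

end Contraction

theorem stmt7_general {N : ℕ} (P : Matrix (Fin N) (Fin N) ℝ)
    (hP2 : ∀ i, ∑ j, P i j = 1)
    (μ ν : Fin N → ℝ)
    (hμ : (∀ i, 0 ≤ μ i) ∧ ∑ i, μ i = 1)
    (hν : (∀ i, 0 ≤ ν i) ∧ ∑ i, ν i = 1) :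
    ∑ j, |((μ - ν) ᵥ* P) j| ≤
      (1 - ⨅ p : Fin N × Fin N, ∑ j, min (P p.1 j) (P p.2 j)) * ∑ i, |μ i - ν i| := by
  have hmin (i i' : Fin N) : ⨅ p : Fin N × Fin N, ∑ j, min (P p.1 j) (P p.2 j)
      ≤ ∑ j, min (P i j) (P i' j) :=
    ciInf_le (Set.finite_range _).bddBelow (i, i')
  refine sum_abs_vecMul_le_of_sum_eq_zero P ?_ fun i i' => ?_
  · simp only [Pi.sub_apply, sum_sub_distrib, hμ.2, hν.2, sub_self]
  · rw [sum_abs_sub_eq_two_mul_one_sub_sum_min P hP2]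
    linarith [hmin i i']

/-- Dobrushin contraction: `‖(μ - ν) P‖₁ ≤ δ(P) ‖μ - ν‖₁` where
`δ(P) = 1 - min_{i,i'} ∑_j min(p_{ij}, p_{i'j})`. -/
theorem stmt7 {N : ℕ} (hN : 0 < N) (P : Matrix (Fin N) (Fin N) ℝ)
    (hP1 : ∀ i j, 0 ≤ P i j) (hP2 : ∀ i, ∑ j, P i j = 1)
    (μ ν : Fin N → ℝ)
    (hμ : (∀ i, 0 ≤ μ i) ∧ ∑ i, μ i = 1)
    (hν : (∀ i, 0 ≤ ν i) ∧ ∑ i, ν i = 1) :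
    ∑ j, |((μ - ν) ᵥ* P) j| ≤
      (1 - ⨅ p : Fin N × Fin N, ∑ j, min (P p.1 j) (P p.2 j)) * ∑ i, |μ i - ν i| :=
  stmt7_general P hP2 μ ν hμ hν
end

section
/- In the mean-field two-block SBM, if at every step green light is given to all of block 1, then ‖C_{t+1}‖₁ = (pK/(pK+q)) ‖C_t‖₁, assuming the cash vector is block-constant at each step. -/
/-! Green light to block 1 only moves cash, so the total stays zero. A balanced block-constant
vector has ℓ¹ norm `2 K n |c₁|`, determined by its block-1 entry alone, and that entry is scaled
by `pK/(pK+q)`. -/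

theorem blockL1_eq_of_balanced {K n c1 c2 : ℝ} (hK : 0 ≤ K) (hn : 0 ≤ n)
    (hbal : K * n * c1 + n * c2 = 0) :
    K * n * |c1| + n * |c2| = 2 * (K * n * |c1|) := by
  have hc2 : n * c2 = -(K * n * c1) := by linear_combination hbal
  have hblock2 : n * |c2| = K * n * |c1| := by
    calc n * |c2| = |n * c2| := by rw [abs_mul, abs_of_nonneg hn]
      _ = K * n * |c1| := by rw [hc2, abs_neg, abs_mul, abs_of_nonneg (mul_nonneg hK hn)]
  rw [hblock2]
  ring

theorem greenLight_total_cash {K n p q : ℝ} (hden : p * K + q ≠ 0) (c1 c2 : ℝ) :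
    K * n * (c1 * (p * K / (p * K + q))) + n * (c2 + c1 * (q * K / (p * K + q)))
      = K * n * c1 + n * c2 := by
  have hsplit : p * K / (p * K + q) * K + q * K / (p * K + q) = K := by
    rw [div_mul_eq_mul_div, ← add_div, div_eq_iff hden]
    ring
  linear_combination (n * c1) * hsplit

/-- Two-block mean-field SBM: green light to block 1 contracts the ℓ¹ cash norm
by exactly `pK/(pK+q)`. -/
theorem stmt11 (K n p q c1 c2 c1' c2' : ℝ)
    (hK : 1 ≤ K) (hn : 0 < n) (hq : 0 < q) (hpq : q < p)
    (hbal : K * n * c1 + n * c2 = 0)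
    (h1 : c1' = c1 * (p * K / (p * K + q)))
    (h2 : c2' = c2 + c1 * (q * K / (p * K + q))) :
    K * n * |c1'| + n * |c2'| = (p * K / (p * K + q)) * (K * n * |c1| + n * |c2|) := by
  have hp : 0 < p := hq.trans hpq
  have hK0 : 0 ≤ K := zero_le_one.trans hK
  have hden : 0 < p * K + q := by positivity
  have hratio : 0 ≤ p * K / (p * K + q) := by positivity
  have hbal' : K * n * c1' + n * c2' = 0 := by
    rw [h1, h2, greenLight_total_cash hden.ne', hbal]
  rw [blockL1_eq_of_balanced hK0 hn.le hbal', blockL1_eq_of_balanced hK0 hn.le hbal, h1,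
    abs_mul, abs_of_nonneg hratio]
  ring
end

section
/- In the mean-field two-block SBM, if at every step green light is given to all of block 2 (the smaller block), then ‖C_{t+1}‖₁ = (p/(qK+p)) ‖C_t‖₁; consequently, for K > 1 this contraction factor is strictly smaller than the factor pK/(pK+q) obtained when block 1 receives green light. -/
/-!
Green light to block 2 moves the cash vector along the line of balanced vectors
`K n c₁ + n c₂ = 0`, and on that line the ℓ¹ norm is `2 n |c₂|`. Since the update scales `c₂` by
`p / (qK + p)`, it scales the ℓ¹ norm by the same factor. Comparing the two factors amounts,
after cross-multiplying, to `pq < pqK²`.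
-/

theorem l1_eq_of_balanced {K n c₁ c₂ : ℝ} (hK : 0 ≤ K) (hn : 0 ≤ n)
    (hbal : K * n * c₁ + n * c₂ = 0) :
    K * n * |c₁| + n * |c₂| = 2 * n * |c₂| := by
  have hblock : K * n * c₁ = -(n * c₂) := by linarith
  have habs : K * n * |c₁| = n * |c₂| := by
    simpa only [abs_mul, abs_neg, abs_of_nonneg hK, abs_of_nonneg hn] using congrArg abs hblock
  linarith

theorem balanced_after_greenLight_two {K n p q c₁ c₂ : ℝ} (hd : q * K + p ≠ 0)
    (hbal : K * n * c₁ + n * c₂ = 0) :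
    K * n * (c₁ + c₂ * (q / (q * K + p))) + n * (c₂ * (p / (q * K + p))) = 0 := by
  have hsplit : q / (q * K + p) * K + p / (q * K + p) = 1 := by
    field_simp
  linear_combination hbal + n * c₂ * hsplit

theorem div_lt_mul_div_of_one_lt {K p q : ℝ} (hp : 0 < p) (hq : 0 < q) (hK : 1 < K) :
    p / (q * K + p) < p * K / (p * K + q) := by
  have hK0 : 0 < K := one_pos.trans hK
  rw [div_lt_div_iff₀ (by positivity) (by positivity)]
  nlinarith [mul_pos (mul_pos hp hq) (mul_pos (sub_pos.2 hK) (by linarith : (0 : ℝ) < K + 1))]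

/-- Two-block mean-field SBM: green light to block 2 (the smaller block) contracts
the ℓ¹ cash norm by exactly `p/(qK+p)`, which for `K > 1` is strictly smaller than
the factor `pK/(pK+q)` obtained when block 1 receives green light. -/
theorem stmt12 (K n p q c1 c2 c1' c2' : ℝ)
    (hK : 1 ≤ K) (hn : 0 < n) (hq : 0 < q) (hpq : q < p)
    (hbal : K * n * c1 + n * c2 = 0)
    (h2 : c2' = c2 * (p / (q * K + p)))
    (h1 : c1' = c1 + c2 * (q / (q * K + p))) :
    K * n * |c1'| + n * |c2'| = (p / (q * K + p)) * (K * n * |c1| + n * |c2|) ∧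
      (1 < K → p / (q * K + p) < p * K / (p * K + q)) := by
  have hK0 : 0 ≤ K := zero_le_one.trans hK
  have hp : 0 < p := hq.trans hpq
  have hd : 0 < q * K + p := by positivity
  have hbal' : K * n * c1' + n * c2' = 0 := h1 ▸ h2 ▸ balanced_after_greenLight_two hd.ne' hbal
  refine ⟨?_, div_lt_mul_div_of_one_lt hp hq⟩
  rw [l1_eq_of_balanced hK0 hn.le hbal', l1_eq_of_balanced hK0 hn.le hbal, h2, abs_mul,
    abs_of_pos (div_pos hp hd)]
  ring
end

section
/- The second largest eigenvalue of the transition matrix of the mean-field two-block SBM equals λ₂ = (p² - q²)K / ((pK + q)(qK + p)). -/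
/-!
An eigenvector of a blockwise-constant matrix for an eigenvalue `r ≠ 0` is blockwise constant,
so its two block sums satisfy the eigen-equations of a `2 × 2` quotient matrix; hence the nonzero
eigenvalues are exactly the nonzero roots of that matrix's characteristic polynomial.
For the two-block SBM this polynomial is `(r - 1)(r - λ₂)`, and since `λ₂ > 0` every
eigenvalue other than `1` is `λ₂` or `0`.
-/

open Matrix

namespace Matrix

theorem mem_spectrum_iff_exists_mulVec_eq_smul {R ι : Type*} [Field R] [Fintype ι]
    [DecidableEq ι] (A : Matrix ι ι R) (r : R) :
    r ∈ spectrum R A ↔ ∃ v, v ≠ 0 ∧ A *ᵥ v = r • v := by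
  simp only [← spectrum_toLin', ← Module.End.hasEigenvalue_iff_mem_spectrum,
    Module.End.hasEigenvalue_iff, Submodule.ne_bot_iff, Module.End.mem_eigenspace_iff,
    toLin'_apply]
  exact exists_congr fun v => and_comm

end Matrix

theorem sub_mul_sub_eq_mul_of_eigenpair {R : Type*} [Field R] {α β γ δ r x y : R}
    (hxy : x ≠ 0 ∨ y ≠ 0) (hx : r * x = α * x + β * y) (hy : r * y = γ * x + δ * y) :
    (r - α) * (r - δ) = β * γ := by
  rw [← sub_eq_zero]
  rcases hxy with hx0 | hy0
  · refine (mul_eq_zero.1 ?_).resolve_right hx0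
    linear_combination (r - δ) * hx + β * hy
  · refine (mul_eq_zero.1 ?_).resolve_right hy0
    linear_combination γ * hx + (r - α) * hy

namespace Matrix

variable {R m k : Type*} [Field R] [Fintype m] [Fintype k]

def blockConst (a b c d : R) : Matrix (m ⊕ k) (m ⊕ k) R :=
  fromBlocks (of fun _ _ => a) (of fun _ _ => b) (of fun _ _ => c) (of fun _ _ => d)

variable {a b c d : R}

@[simp]
theorem blockConst_mulVec_inl (v : m ⊕ k → R) (i : m) :
    (blockConst a b c d *ᵥ v) (Sum.inl i) =
      a * ∑ j, v (Sum.inl j) + b * ∑ j, v (Sum.inr j) := by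
  simp [blockConst, mulVec, dotProduct, Finset.mul_sum]

@[simp]
theorem blockConst_mulVec_inr (v : m ⊕ k → R) (i : k) :
    (blockConst a b c d *ᵥ v) (Sum.inr i) =
      c * ∑ j, v (Sum.inl j) + d * ∑ j, v (Sum.inr j) := by
  simp [blockConst, mulVec, dotProduct, Finset.mul_sum]

variable [DecidableEq m] [DecidableEq k]

theorem sub_mul_sub_eq_of_mem_spectrum_blockConst {r : R} (hr : r ≠ 0)
    (h : r ∈ spectrum R (blockConst (m := m) (k := k) a b c d)) :
    (r - a * Fintype.card m) * (r - d * Fintype.card k) =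
      b * Fintype.card m * (c * Fintype.card k) := by
  obtain ⟨v, hv, hAv⟩ := (mem_spectrum_iff_exists_mulVec_eq_smul _ r).1 h
  have hinl (i : m) :
      r * v (Sum.inl i) = a * ∑ j, v (Sum.inl j) + b * ∑ j, v (Sum.inr j) := by
    simpa using (congrFun hAv (Sum.inl i)).symm
  have hinr (i : k) :
      r * v (Sum.inr i) = c * ∑ j, v (Sum.inl j) + d * ∑ j, v (Sum.inr j) := by
    simpa using (congrFun hAv (Sum.inr i)).symm
  refine sub_mul_sub_eq_mul_of_eigenpair (x := ∑ j, v (Sum.inl j))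
    (y := ∑ j, v (Sum.inr j)) ?_ ?_ ?_
  · by_contra! h0
    refine hv (funext fun i => ?_)
    rcases i with i | i
    · simpa [h0, hr] using hinl i
    · simpa [h0, hr] using hinr i
  · rw [Finset.mul_sum, Finset.sum_congr rfl fun i _ => hinl i]
    simp only [Finset.sum_const, Finset.card_univ, nsmul_eq_mul]
    ring
  · rw [Finset.mul_sum, Finset.sum_congr rfl fun i _ => hinr i]
    simp only [Finset.sum_const, Finset.card_univ, nsmul_eq_mul]
    ring

theorem mem_spectrum_blockConst_of_sub_mul_sub_eq [Nonempty m] {r : R} (hb : b ≠ 0)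
    (hk : (Fintype.card k : R) ≠ 0)
    (h : (r - a * Fintype.card m) * (r - d * Fintype.card k) =
      b * Fintype.card m * (c * Fintype.card k)) :
    r ∈ spectrum R (blockConst (m := m) (k := k) a b c d) := by
  rw [mem_spectrum_iff_exists_mulVec_eq_smul]
  refine ⟨Sum.elim (fun _ => b * Fintype.card k) (fun _ => r - a * Fintype.card m), ?_, ?_⟩
  · intro h0
    have := congrFun h0 (Sum.inl (Classical.arbitrary m))
    simp_all
  · funext i
    rcases i with i | i <;>
      simp only [blockConst_mulVec_inl, blockConst_mulVec_inr, Sum.elim_inl, Sum.elim_inr,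
        Finset.sum_const, Finset.card_univ, nsmul_eq_mul, Pi.smul_apply, smul_eq_mul]
    · ring
    · linear_combination -h

end Matrix

noncomputable section SBM

def sbmTransition (K n : ℕ) (p q : ℝ) :
    Matrix (Fin (K * n) ⊕ Fin n) (Fin (K * n) ⊕ Fin n) ℝ :=
  blockConst (p / (p * ((K : ℝ) * n) + q * n)) (q / (p * ((K : ℝ) * n) + q * n))
    (q / (q * ((K : ℝ) * n) + p * n)) (p / (q * ((K : ℝ) * n) + p * n))

def sbmLambda2 (K : ℕ) (p q : ℝ) : ℝ :=
  (p ^ 2 - q ^ 2) * K / ((p * K + q) * (q * K + p))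

variable {K n : ℕ} {p q : ℝ}

theorem mem_spectrum_sbmTransition_iff (hK : 1 ≤ K) (hn : 1 ≤ n) (hq : 0 < q) (hp : 0 < p)
    {r : ℝ} (hr : r ≠ 0) :
    r ∈ spectrum ℝ (sbmTransition K n p q) ↔ r = 1 ∨ r = sbmLambda2 K p q := by
  have hK0 : (0 : ℝ) < K := by exact_mod_cast hK
  have hn0 : (0 : ℝ) < n := by exact_mod_cast hn
  have hpK : p * K + q ≠ 0 := by positivity
  have hqK : q * K + p ≠ 0 := by positivity
  have : Nonempty (Fin (K * n)) := ⟨⟨0, Nat.mul_pos hK hn⟩⟩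
  -- the `2 × 2` quotient matrix has trace `1 + λ₂` and determinant `λ₂`
  have hquad : (r - p / (p * ((K : ℝ) * n) + q * n) * Fintype.card (Fin (K * n))) *
        (r - p / (q * ((K : ℝ) * n) + p * n) * Fintype.card (Fin n)) -
      q / (p * ((K : ℝ) * n) + q * n) * Fintype.card (Fin (K * n)) *
        (q / (q * ((K : ℝ) * n) + p * n) * Fintype.card (Fin n)) =
      (r - 1) * (r - sbmLambda2 K p q) := by
    simp only [Fintype.card_fin, Nat.cast_mul, sbmLambda2]
    field_simp
    ring
  rw [sbmTransition, ← sub_eq_zero (a := r), ← sub_eq_zero (a := r),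
    ← mul_eq_zero, ← hquad, sub_eq_zero]
  exact ⟨sub_mul_sub_eq_of_mem_spectrum_blockConst hr,
    mem_spectrum_blockConst_of_sub_mul_sub_eq (by positivity) (by simpa using hn0.ne')⟩

theorem sbmLambda2_pos (hK : 1 ≤ K) (hq : 0 < q) (hpq : q < p) : 0 < sbmLambda2 K p q := by
  have hK0 : (0 : ℝ) < K := by exact_mod_cast hK
  have hp : 0 < p := hq.trans hpq
  have hpq2 : 0 < p ^ 2 - q ^ 2 := by nlinarith
  unfold sbmLambda2
  positivity

theorem sbmLambda2_isSecondEigenvalue (hK : 1 ≤ K) (hn : 1 ≤ n) (hq : 0 < q) (hpq : q < p) :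
    sbmLambda2 K p q ∈ spectrum ℝ (sbmTransition K n p q) ∧
      ∀ lam ∈ spectrum ℝ (sbmTransition K n p q), lam ≠ 1 → lam ≤ sbmLambda2 K p q := by
  have hp : 0 < p := hq.trans hpq
  have hlam2 : 0 < sbmLambda2 K p q := sbmLambda2_pos hK hq hpq
  refine ⟨(mem_spectrum_sbmTransition_iff hK hn hq hp hlam2.ne').2 (Or.inr rfl),
    fun lam hlam hne => ?_⟩
  rcases eq_or_ne lam 0 with rfl | h0
  · exact hlam2.le
  · exact (((mem_spectrum_sbmTransition_iff hK hn hq hp h0).1 hlam).resolve_left hne).le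

end SBM

/-- The second largest eigenvalue of the two-block mean-field SBM transition matrix
equals `λ₂ = (p² - q²) K / ((pK + q)(qK + p))`: `λ₂` is an eigenvalue, and every
eigenvalue other than `1` is at most `λ₂`. -/
theorem stmt13 (K n : ℕ) (hK : 1 ≤ K) (hn : 1 ≤ n)
    (p q : ℝ) (hq : 0 < q) (hpq : q < p) :
    ((p ^ 2 - q ^ 2) * (K : ℝ) / ((p * K + q) * (q * K + p))) ∈
      spectrum ℝ (Matrix.of (fun i j =>
        match i, j with
        | Sum.inl _, Sum.inl _ => p / (p * ((K : ℝ) * n) + q * n)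
        | Sum.inl _, Sum.inr _ => q / (p * ((K : ℝ) * n) + q * n)
        | Sum.inr _, Sum.inl _ => q / (q * ((K : ℝ) * n) + p * n)
        | Sum.inr _, Sum.inr _ => p / (q * ((K : ℝ) * n) + p * n) :
        Matrix (Fin (K * n) ⊕ Fin n) (Fin (K * n) ⊕ Fin n) ℝ)) ∧
    ∀ lam ∈ spectrum ℝ (Matrix.of (fun i j =>
        match i, j with
        | Sum.inl _, Sum.inl _ => p / (p * ((K : ℝ) * n) + q * n)
        | Sum.inl _, Sum.inr _ => q / (p * ((K : ℝ) * n) + q * n)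
        | Sum.inr _, Sum.inl _ => q / (q * ((K : ℝ) * n) + p * n)
        | Sum.inr _, Sum.inr _ => p / (q * ((K : ℝ) * n) + p * n) :
        Matrix (Fin (K * n) ⊕ Fin n) (Fin (K * n) ⊕ Fin n) ℝ)),
      lam ≠ 1 → lam ≤ (p ^ 2 - q ^ 2) * (K : ℝ) / ((p * K + q) * (q * K + p)) := by
  have hP : (Matrix.of (fun i j =>
        match i, j with
        | Sum.inl _, Sum.inl _ => p / (p * ((K : ℝ) * n) + q * n)
        | Sum.inl _, Sum.inr _ => q / (p * ((K : ℝ) * n) + q * n)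
        | Sum.inr _, Sum.inl _ => q / (q * ((K : ℝ) * n) + p * n)
        | Sum.inr _, Sum.inr _ => p / (q * ((K : ℝ) * n) + p * n) :
        Matrix (Fin (K * n) ⊕ Fin n) (Fin (K * n) ⊕ Fin n) ℝ)) = sbmTransition K n p q := by
    ext (i | i) (j | j) <;> rfl
  rw [hP]
  exact sbmLambda2_isSecondEigenvalue hK hn hq hpq
end

section
/- In the three-block mean-field SBM with green light given only to block i at every step, if c_{1,j} > 0 for some block j ≠ i while c_{1,i} > 0, then liminf_{t→∞} ‖C_t‖₁ ≥ (N_j/(N - N_i))·c_{1,i}·N_i + c_{1,j}·N_j > 0, so the RLGL algorithm does not converge. -/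
open Finset Filter Topology

/-!
Under green light to block `i` alone, block `i` keeps the fraction `r = N_i p / D` of its cash
at every step and hands `a = N_i q / D` of it to every other block, with
`D = N_i (p - q) + N q`. Hence `c_{t,i} → 0` geometrically, while every other block's cash
converges to `c_{1,l} + c_{1,i} a / (1 - r) = c_{1,l} + c_{1,i} N_i / (N - N_i)`. The weighted
`ℓ¹` norm therefore converges, and its limit dominates the contribution of block `j`.
-/

lemma eq_mul_pow_of_succ_eq_mul {x : ℕ → ℝ} {r : ℝ} (hx : ∀ n, x (n + 1) = x n * r) (n : ℕ) :
    x n = x 0 * r ^ n := by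
  induction n with
  | zero => simp
  | succ n ih => rw [hx, ih, pow_succ, mul_assoc]

lemma tendsto_zero_of_succ_eq_mul {x : ℕ → ℝ} {r : ℝ} (hr : |r| < 1)
    (hx : ∀ n, x (n + 1) = x n * r) : Tendsto x atTop (𝓝 0) := by
  simpa only [mul_zero] using ((tendsto_pow_atTop_nhds_zero_of_abs_lt_one hr).const_mul
    (x 0)).congr fun n => (eq_mul_pow_of_succ_eq_mul hx n).symm

lemma tendsto_of_succ_eq_add_geometric {x y : ℕ → ℝ} {r a : ℝ} (hr : |r| < 1)
    (hx : ∀ n, x (n + 1) = x n * r) (hy : ∀ n, y (n + 1) = y n + x n * a) :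
    Tendsto y atTop (𝓝 (y 0 + x 0 * a / (1 - r))) := by
  have hsum : HasSum (fun n => x n * a) (x 0 * a / (1 - r)) := by
    have hterm : (fun n => x n * a) = fun n => x 0 * a * r ^ n := by
      funext n
      rw [eq_mul_pow_of_succ_eq_mul hx n]
      ring
    rw [hterm, div_eq_mul_inv]
    exact (hasSum_geometric_of_abs_lt_one hr).mul_left (x 0 * a)
  have hy_eq (n : ℕ) : y 0 + ∑ s ∈ range n, x s * a = y n := by
    have := sum_range_sub y n
    simp only [hy, add_sub_cancel_left] at this
    linarith
  exact (tendsto_const_nhds.add hsum.tendsto_sum_nat).congr hy_eq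

lemma le_liminf_sum_mul_abs {ι : Type*} [Fintype ι] {w : ι → ℝ} (hw : ∀ k, 0 ≤ w k)
    {c : ℕ → ι → ℝ} {L : ι → ℝ} (hc : Tendsto c atTop (𝓝 L)) (j : ι) :
    w j * L j ≤ atTop.liminf (fun t => ∑ k, w k * |c t k|) := by
  have hnorm : Tendsto (fun t => ∑ k, w k * |c t k|) atTop (𝓝 (∑ k, w k * |L k|)) :=
    tendsto_finsetSum _ fun k _ => ((tendsto_pi_nhds.1 hc k).abs.const_mul (w k))
  rw [hnorm.liminf_eq]
  calc w j * L j ≤ w j * |L j| := mul_le_mul_of_nonneg_left (le_abs_self _) (hw j)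
    _ ≤ ∑ k, w k * |L k| :=
      single_le_sum (fun k _ => mul_nonneg (hw k) (abs_nonneg _)) (mem_univ j)

lemma mul_div_div_one_sub_mul_div {Ni S p q : ℝ} (hq : q ≠ 0)
    (hD : Ni * (p - q) + S * q ≠ 0) :
    Ni * q / (Ni * (p - q) + S * q) / (1 - Ni * p / (Ni * (p - q) + S * q)) = Ni / (S - Ni) := by
  have hsub : Ni * (p - q) + S * q - Ni * p = (S - Ni) * q := by ring
  rw [one_sub_div hD, div_div_div_cancel_right₀ hD, hsub, mul_div_mul_right _ _ hq]

theorem stmt15_general (Nv : Fin 3 → ℝ) (hNv : ∀ k, 0 < Nv k)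
    (p q : ℝ) (hq : 0 < q) (hpq : q < p)
    (i j : Fin 3) (hij : j ≠ i) (c : ℕ → Fin 3 → ℝ)
    (hupd_i : ∀ t ≥ 1, c (t + 1) i =
      c t i * (Nv i * p / (Nv i * (p - q) + (∑ k, Nv k) * q)))
    (hupd_j : ∀ t ≥ 1, ∀ l ≠ i, c (t + 1) l =
      c t l + c t i * (Nv i * q / (Nv i * (p - q) + (∑ k, Nv k) * q)))
    (hci : 0 < c 1 i) (hcj : 0 < c 1 j) :
    (Nv j / ((∑ k, Nv k) - Nv i)) * (c 1 i * Nv i) + c 1 j * Nv j ≤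
        Filter.atTop.liminf (fun t => ∑ k, Nv k * |c t k|) ∧
      0 < (Nv j / ((∑ k, Nv k) - Nv i)) * (c 1 i * Nv i) + c 1 j * Nv j := by
  set S := ∑ k, Nv k
  have hSi : 0 < S - Nv i :=
    sub_pos.2 (single_lt_sum hij (mem_univ i) (mem_univ j) (hNv j) fun k _ _ => (hNv k).le)
  have hD : 0 < Nv i * (p - q) + S * q := by nlinarith [hNv i]
  have hr : |Nv i * p / (Nv i * (p - q) + S * q)| < 1 := by
    rw [abs_lt, lt_div_iff₀ hD, div_lt_one hD]
    constructor <;> nlinarith [hNv i]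
  have hx (n : ℕ) : c (n + 1 + 1) i = c (n + 1) i * (Nv i * p / (Nv i * (p - q) + S * q)) :=
    hupd_i (n + 1) le_add_self
  set L : Fin 3 → ℝ := fun k => if k = i then 0 else c 1 k + c 1 i * Nv i / (S - Nv i)
  have hc : Tendsto c atTop (𝓝 L) := by
    refine tendsto_pi_nhds.2 fun k => (tendsto_add_atTop_iff_nat 1).1 ?_
    by_cases hk : k = i
    · subst hk
      simpa [L] using tendsto_zero_of_succ_eq_mul hr hx
    · have := tendsto_of_succ_eq_add_geometric (x := fun n => c (n + 1) i)
        (y := fun n => c (n + 1) k) hr hx fun n => hupd_j (n + 1) le_add_self k hk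
      rw [mul_div_assoc, mul_div_div_one_sub_mul_div hq.ne' hD.ne', ← mul_div_assoc] at this
      simpa [L, hk] using this
  refine ⟨le_of_eq_of_le ?_ (le_liminf_sum_mul_abs (fun k => (hNv k).le) hc j),
    add_pos (mul_pos (div_pos (hNv j) hSi) (mul_pos hci (hNv i))) (mul_pos hcj (hNv j))⟩
  simp only [L, hij, if_false]
  field_simp
  ring

/-- Three-block mean-field SBM, green light only to block `i`: if `c_{1,i} > 0` and
`c_{1,j} > 0` for some `j ≠ i`, then
`liminf ‖C_t‖₁ ≥ (N_j/(N - N_i)) c_{1,i} N_i + c_{1,j} N_j > 0`,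
so the RLGL algorithm does not converge. -/
theorem stmt15 (Nv : Fin 3 → ℝ) (hNv : ∀ k, 0 < Nv k)
    (p q : ℝ) (hq : 0 < q) (hpq : q < p)
    (i j : Fin 3) (hij : j ≠ i) (c : ℕ → Fin 3 → ℝ)
    (hbal : ∀ t ≥ 1, ∑ k, Nv k * c t k = 0)
    (hupd_i : ∀ t ≥ 1, c (t + 1) i =
      c t i * (Nv i * p / (Nv i * (p - q) + (∑ k, Nv k) * q)))
    (hupd_j : ∀ t ≥ 1, ∀ l ≠ i, c (t + 1) l =
      c t l + c t i * (Nv i * q / (Nv i * (p - q) + (∑ k, Nv k) * q)))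
    (hci : 0 < c 1 i) (hcj : 0 < c 1 j) :
    (Nv j / ((∑ k, Nv k) - Nv i)) * (c 1 i * Nv i) + c 1 j * Nv j ≤
        Filter.atTop.liminf (fun t => ∑ k, Nv k * |c t k|) ∧
      0 < (Nv j / ((∑ k, Nv k) - Nv i)) * (c 1 i * Nv i) + c 1 j * Nv j :=
  stmt15_general Nv hNv p q hq hpq i j hij c hupd_i hupd_j hci hcj
end

section
/- The value function of the block-scheduling Markov decision problem is symmetric: V(-c) = V(c) for every state c, and the optimal action sets coincide: A(-c) = A(c). -/
/-!
Negation commutes with the linear transitions and leaves the `ℓ¹`-threshold cost unchanged, so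
by induction every value-iteration iterate is even, hence so is its limit `V`; the two argmin
conditions then agree term by term.
-/

open Filter

section ValueIteration

variable {α E β F : Type*} [AddGroup E] [FunLike F E E] [AddMonoidHomClass F E E]
  [InfSet β] [Add β]

theorem valueIteration_apply_neg (f : α → F) (κ : E → α → β)
    (hκ : ∀ c a, κ (-c) a = κ c a) (Vn : ℕ → E → β) (hV0 : ∀ c, Vn 0 (-c) = Vn 0 c)
    (hVrec : ∀ n c, Vn (n + 1) c = ⨅ a : α, (κ c a + Vn n (f a c))) (n : ℕ) (c : E) :
    Vn n (-c) = Vn n c := by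
  induction n generalizing c with
  | zero => exact hV0 c
  | succ n ih => simp only [hVrec, hκ, map_neg, ih]

end ValueIteration

theorem limit_apply_neg_of_tendsto {X Y : Type*} [Neg X] [TopologicalSpace Y] [T2Space Y]
    {u : ℕ → X → Y} {g : X → Y} (hu : ∀ n x, u n (-x) = u n x)
    (hg : ∀ x, Tendsto (fun n => u n x) atTop (nhds (g x))) (x : X) : g (-x) = g x :=
  tendsto_nhds_unique (by simpa only [hu] using hg (-x)) (hg x)

theorem stmt16_general {α : Type*}
    (f : α → (ℝ × ℝ) →ₗ[ℝ] (ℝ × ℝ))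
    (cost : α → ℝ)
    (ε : ℝ)
    (κ : (ℝ × ℝ) → α → ℝ)
    (hκ : ∀ c a, κ c a = if |c.1| + |c.2| ≤ ε then 0 else cost a)
    (Vn : ℕ → (ℝ × ℝ) → ℝ)
    (hV0 : Vn 0 = 0)
    (hVrec : ∀ n c, Vn (n + 1) c = ⨅ a : α, (κ c a + Vn n (f a c)))
    (V : (ℝ × ℝ) → ℝ)
    (hV : ∀ c, Tendsto (fun n => Vn n c) atTop (nhds (V c))) :
    ∀ c : ℝ × ℝ,
      V (-c) = V c ∧
      {a : α | ∀ b : α, κ c a + V (f a c) ≤ κ c b + V (f b c)} =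
        {a : α | ∀ b : α, κ (-c) a + V (f a (-c)) ≤ κ (-c) b + V (f b (-c))} := by
  have hκ_neg : ∀ c a, κ (-c) a = κ c a := by simp [hκ]
  have hVn_neg := valueIteration_apply_neg f κ hκ_neg Vn (by simp [hV0]) hVrec
  have hV_neg := limit_apply_neg_of_tendsto hVn_neg hV
  intro c
  refine ⟨hV_neg c, ?_⟩
  ext a
  simp only [Set.mem_ofPred_eq, hκ_neg, map_neg, hV_neg]

/-- Symmetry of the value function and optimal action sets of the block-scheduling
MDP: `V(-c) = V(c)` and `A(-c) = A(c)`, where the one-step cost is zero whenever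
`‖c‖₁ ≤ ε` and equals `κ(a)` otherwise, transitions are linear, and `V` is the
limit of value iteration started from `V₀ ≡ 0`. -/
theorem stmt16 {α : Type*} [Fintype α] [Nonempty α]
    (f : α → (ℝ × ℝ) →ₗ[ℝ] (ℝ × ℝ))
    (cost : α → ℝ) (hcost : ∀ a, 0 ≤ cost a)
    (ε : ℝ) (hε : 0 < ε)
    (κ : (ℝ × ℝ) → α → ℝ)
    (hκ : ∀ c a, κ c a = if |c.1| + |c.2| ≤ ε then 0 else cost a)
    (Vn : ℕ → (ℝ × ℝ) → ℝ)
    (hV0 : Vn 0 = 0)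
    (hVrec : ∀ n c, Vn (n + 1) c = ⨅ a : α, (κ c a + Vn n (f a c)))
    (V : (ℝ × ℝ) → ℝ)
    (hV : ∀ c, Tendsto (fun n => Vn n c) atTop (nhds (V c))) :
    ∀ c : ℝ × ℝ,
      V (-c) = V c ∧
      {a : α | ∀ b : α, κ c a + V (f a c) ≤ κ c b + V (f b c)} =
        {a : α | ∀ b : α, κ (-c) a + V (f a (-c)) ≤ κ (-c) b + V (f b (-c))} :=
  stmt16_general f cost ε κ hκ Vn hV0 hVrec V hV
end
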